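/- arXiv:2410.12338 — 6 statements merged into one kernel-verified Lean document; each statement's English description precedes it below -/
import Mathlib

section
/- Let r, w, x, y, z be non-negative integers with r ≥ 2, x + y = w + z, x ≥ w, x ≥ z, and x ≥ r. Then C(x,r) + C(y,r) ≥ C(w,r) + C(z,r). Moreover, the inequality is strict if x > w and x > z. -/
/-!
Since `C(n + 1, r) - C(n, r) = C(n, r - 1)` is nondecreasing in `n`, the sequence `n ↦ C(n, r)` is
convex, and strictly so beyond `r - 1` when `r ≥ 2`. Assuming `z ≤ w`, we have `y ≤ z ≤ w ≤ x` with
`z - y = x - w`, so the claim compares the increase of `C(·, r)` over two intervals of the same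
length, the one starting at `w` lying to the right of the one starting at `y`.
-/

namespace Nat

theorem choose_lt_choose_of_lt {b c k : ℕ} (hk : 0 < k) (hkc : k ≤ c) (hbc : b < c) :
    b.choose k < c.choose k := by
  obtain ⟨n, rfl⟩ : ∃ n, c = n + 1 := ⟨c - 1, by omega⟩
  obtain ⟨j, rfl⟩ : ∃ j, k = j + 1 := ⟨k - 1, by omega⟩
  rw [choose_succ_succ']
  have hpos : 0 < n.choose j := choose_pos (by omega)
  have hmono : b.choose (j + 1) ≤ n.choose (j + 1) := choose_le_choose _ (by omega)
  omega

theorem choose_add_choose_add_le {y w : ℕ} (r d : ℕ) (hyw : y ≤ w) :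
    w.choose r + (y + d).choose r ≤ (w + d).choose r + y.choose r := by
  rcases r with _ | s
  · simp
  induction d with
  | zero => exact le_rfl
  | succ d ih =>
    rw [← add_assoc, ← add_assoc, choose_succ_succ' (y + d), choose_succ_succ' (w + d)]
    have := choose_le_choose s (show y + d ≤ w + d by omega)
    omega

theorem choose_add_choose_add_lt {y w r d : ℕ} (hr : 2 ≤ r) (hyw : y < w) (hd : 0 < d)
    (hrw : r ≤ w + d) : w.choose r + (y + d).choose r < (w + d).choose r + y.choose r := by
  obtain ⟨e, rfl⟩ : ∃ e, d = e + 1 := ⟨d - 1, by omega⟩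
  obtain ⟨s, rfl⟩ : ∃ s, r = s + 1 := ⟨r - 1, by omega⟩
  rw [← add_assoc, ← add_assoc, choose_succ_succ' (y + e), choose_succ_succ' (w + e)]
  have hle := choose_add_choose_add_le (s + 1) e hyw.le
  have hlt := choose_lt_choose_of_lt (show 0 < s by omega) (show s ≤ w + e by omega)
    (show y + e < w + e by omega)
  omega

end Nat

theorem chakraborti_chen (r w x y z : ℕ) (hr : 2 ≤ r) (hsum : x + y = w + z)
    (hw : w ≤ x) (hz : z ≤ x) (hxr : r ≤ x) :
    (w.choose r + z.choose r ≤ x.choose r + y.choose r) ∧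
      (w < x → z < x → w.choose r + z.choose r < x.choose r + y.choose r) := by
  wlog hzw : z ≤ w generalizing w z
  · obtain ⟨hle, hlt⟩ := this z w (by omega) hz hw (by omega)
    rw [add_comm (w.choose r)]
    exact ⟨hle, fun hwx hzx => hlt hzx hwx⟩
  obtain ⟨d, rfl⟩ : ∃ d, x = w + d := ⟨x - w, by omega⟩
  obtain rfl : z = y + d := by omega
  refine ⟨?_, fun hwx _ => ?_⟩
  · exact Nat.choose_add_choose_add_le r d (by omega)
  · exact Nat.choose_add_choose_add_lt hr (by omega) (by omega) hxr
end

section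
/- For all integers p ≥ 2 and r ≥ 3 with r ≤ 2p, we have C(2p, r) > 2p · C(p-1, r-1) + C(p-1, r-2). -/
theorem clique_count_compare_even' (p r : ℕ) (hp : 2 ≤ p) (hr : 3 ≤ r)
    (hrp : r ≤ 2 * p) :
    2 * p * (p - 1).choose (r - 1) + (p - 1).choose (r - 2) < (2 * p).choose r := by
  rcases le_or_gt r (p + 1) with hle | hgt
  · -- main case: r ≤ p + 1
    obtain ⟨q, rfl⟩ : ∃ q, p = q + 1 := ⟨p - 1, by omega⟩
    obtain ⟨s, rfl⟩ : ∃ s, r = s + 3 := ⟨r - 3, by omega⟩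
    have hne : ((1 : ℕ), s + 2) ≠ (s + 2, 1) := by
      intro h
      have := congrArg Prod.fst h
      simp at this
    have hsub : ({(1, s + 2), (s + 2, 1)} : Finset (ℕ × ℕ))
        ⊆ Finset.HasAntidiagonal.antidiagonal (s + 3) := by
      intro x hx
      simp only [Finset.mem_insert, Finset.mem_singleton] at hx
      rcases hx with h | h <;> subst h <;> simp [Finset.mem_antidiagonal] <;> omega
    have hsum : (q + 1).choose 1 * (q + 1).choose (s + 2)
        + (q + 1).choose (s + 2) * (q + 1).choose 1 ≤ (2 * (q + 1)).choose (s + 3) := by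
      rw [two_mul]
      rw [Nat.add_choose_eq (q + 1) (q + 1) (s + 3)]
      calc (q + 1).choose 1 * (q + 1).choose (s + 2)
            + (q + 1).choose (s + 2) * (q + 1).choose 1
          = ∑ ij ∈ ({(1, s + 2), (s + 2, 1)} : Finset (ℕ × ℕ)),
              (q + 1).choose ij.1 * (q + 1).choose ij.2 := by
            rw [Finset.sum_pair hne]
        _ ≤ ∑ ij ∈ Finset.HasAntidiagonal.antidiagonal (s + 3),
              (q + 1).choose ij.1 * (q + 1).choose ij.2 :=
            Finset.sum_le_sum_of_subset hsub
    rw [Nat.choose_one_right, Nat.choose_succ_succ (q) (s + 1)] at hsum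
    have hpos : 1 ≤ q.choose (s + 1) := Nat.choose_pos (by omega)
    simp only [show q + 1 - 1 = q from rfl, show s + 3 - 1 = s + 2 from rfl,
      show s + 3 - 2 = s + 1 from rfl]
    nlinarith [hsum, hpos]
  · -- r ≥ p + 2: left side is zero
    have h1 : (p - 1).choose (r - 1) = 0 := Nat.choose_eq_zero_of_lt (by omega)
    have h2 : (p - 1).choose (r - 2) = 0 := Nat.choose_eq_zero_of_lt (by omega)
    have h3 : 0 < (2 * p).choose r := Nat.choose_pos hrp
    simp [h1, h2, h3]
end

section
/- Let G be a connected finite simple graph and let P be a longest path in G, with endpoints u and v. Then the number of vertices of P is at least min{|V(G)|, deg(u) + deg(v) + 1}. -/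
namespace SimpleGraph.Walk

variable {V : Type*} {G : SimpleGraph V}

/-- The prefix of a walk consisting of its first `n` darts. -/
def diracTake {u v : V} : (p : G.Walk u v) → (n : ℕ) → G.Walk u (p.getVert n)
  | .nil, _ => .nil
  | .cons _ _, 0 => .nil
  | .cons h q, n + 1 => .cons h (diracTake q n)

lemma support_diracTake {u v : V} (p : G.Walk u v) (n : ℕ) :
    (p.diracTake n).support = p.support.take (n + 1) := by
  induction p generalizing n with
  | nil => simp [diracTake]
  | cons h q ih =>
    cases n with
    | zero => simp [diracTake]; rfl
    | succ n => simp [diracTake, ih]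

lemma support_drop' {u v : V} (p : G.Walk u v) (n : ℕ) (hn : n ≤ p.length) :
    (p.drop n).support = p.support.drop n := by
  induction p generalizing n with
  | nil =>
    have : n = 0 := by simpa using hn
    subst this; simp [drop]
  | cons h q ih =>
    cases n with
    | zero => simp [drop]
    | succ n =>
      have hn' : n ≤ q.length := by simpa using hn
      simp [drop, ih n hn']

lemma dirac_support_getElem {u v : V} (p : G.Walk u v) (i : ℕ)
    (h : i < p.support.length) : p.support[i] = p.getVert i := by
  induction p generalizing i with
  | nil =>
    have : i = 0 := by simpa using h
    subst this; rfl
  | cons ha q ih =>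
    cases i with
    | zero => rfl
    | succ i =>
      have h' : i < q.support.length := by simpa using h
      simpa [getVert_cons_succ] using ih i h'

lemma dirac_getVert_inj {u v : V} {p : G.Walk u v} (hp : p.IsPath) {i j : ℕ}
    (hi : i ≤ p.length) (hj : j ≤ p.length) (h : p.getVert i = p.getVert j) : i = j := by
  have hi' : i < p.support.length := by rw [length_support]; omega
  have hj' : j < p.support.length := by rw [length_support]; omega
  have h1 := dirac_support_getElem p i hi'
  have h2 := dirac_support_getElem p j hj'
  exact hp.support_nodup.getElem_inj_iff.1 (h1.trans (h.trans h2.symm))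

lemma dirac_exists_boundary {l : List V} :
    ∀ {z u : V} (_ : G.Walk z u), u ∈ l → z ∉ l →
      ∃ x y, G.Adj x y ∧ x ∉ l ∧ y ∈ l := by
  intro z u W
  induction W with
  | nil => intro hu hz; exact absurd hu hz
  | @cons a b c h q ih =>
    intro hu hz
    by_cases hm : b ∈ l
    · exact ⟨a, b, h, hz, hm⟩
    · exact ih hu hm

end SimpleGraph.Walk

open SimpleGraph Walk
theorem dirac_longest_path {V : Type*} [Fintype V] (G : SimpleGraph V)
    [DecidableRel G.Adj] (hconn : G.Connected) {u v : V} (P : G.Walk u v)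
    (hP : P.IsPath)
    (hlongest : ∀ (a b : V) (Q : G.Walk a b), Q.IsPath → Q.length ≤ P.length) :
    min (Fintype.card V) (G.degree u + G.degree v + 1) ≤ P.length + 1 := by
  classical
  rcases le_or_gt (Fintype.card V) (P.length + 1) with hcard | hcard
  · exact le_trans (min_le_left _ _) hcard
  refine le_trans (min_le_right _ _) ?_
  set k := P.length with hk
  suffices hd : G.degree u + G.degree v ≤ k by omega
  by_contra hdeg
  push_neg at hdeg
  -- all neighbors of u and of v lie on P
  have hNu : ∀ w, G.Adj u w → w ∈ P.support := by
    intro w hw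
    by_contra hwP
    have := hlongest w v (Walk.cons hw.symm P)
      ((Walk.cons_isPath_iff _ _).2 ⟨hP, hwP⟩)
    simp only [Walk.length_cons] at this
    omega
  have hNv : ∀ w, G.Adj v w → w ∈ P.support := by
    intro w hw
    by_contra hwP
    have := hlongest w u (Walk.cons hw.symm P.reverse)
      ((Walk.cons_isPath_iff _ _).2 ⟨hP.reverse,
        by simpa [Walk.support_reverse] using hwP⟩)
    simp only [Walk.length_cons, Walk.length_reverse] at this
    omega
  -- counting: pigeonhole on indices
  set S : Finset ℕ := (Finset.range k).filter fun i => G.Adj v (P.getVert i) with hSdef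
  set T : Finset ℕ := (Finset.range k).filter fun i => G.Adj u (P.getVert (i + 1)) with hTdef
  have hS : S.card = G.degree v := by
    rw [← SimpleGraph.card_neighborFinset_eq_degree]
    refine Finset.card_bij (fun a _ => P.getVert a) ?_ ?_ ?_
    · intro a ha
      rw [hSdef, Finset.mem_filter] at ha
      exact (SimpleGraph.mem_neighborFinset _ _ _).2 ha.2
    · intro a ha b hb hab
      rw [hSdef, Finset.mem_filter, Finset.mem_range] at ha hb
      exact Walk.dirac_getVert_inj hP (by omega) (by omega) hab
    · intro b hb
      rw [SimpleGraph.mem_neighborFinset] at hb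
      obtain ⟨j, hj1, hj2⟩ := Walk.mem_support_iff_exists_getVert.1 (hNv b hb)
      have hbv : b ≠ v := fun h => G.irrefl (h ▸ hb)
      have hjk : j ≠ k := by
        intro h
        exact hbv (by rw [← hj1, h, hk, Walk.getVert_length])
      refine ⟨j, ?_, hj1⟩
      rw [hSdef, Finset.mem_filter, Finset.mem_range]
      exact ⟨by omega, by rw [hj1]; exact hb⟩
  have hT : T.card = G.degree u := by
    rw [← SimpleGraph.card_neighborFinset_eq_degree]
    refine Finset.card_bij (fun a _ => P.getVert (a + 1)) ?_ ?_ ?_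
    · intro a ha
      rw [hTdef, Finset.mem_filter] at ha
      exact (SimpleGraph.mem_neighborFinset _ _ _).2 ha.2
    · intro a ha b hb hab
      rw [hTdef, Finset.mem_filter, Finset.mem_range] at ha hb
      have := Walk.dirac_getVert_inj hP (i := a + 1) (j := b + 1) (by omega) (by omega) hab
      omega
    · intro b hb
      rw [SimpleGraph.mem_neighborFinset] at hb
      obtain ⟨j, hj1, hj2⟩ := Walk.mem_support_iff_exists_getVert.1 (hNu b hb)
      have hbu : b ≠ u := fun h => G.irrefl (h ▸ hb)
      have hj0 : j ≠ 0 := by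
        intro h
        exact hbu (by rw [← hj1, h, Walk.getVert_zero])
      refine ⟨j - 1, ?_, ?_⟩
      · rw [hTdef, Finset.mem_filter, Finset.mem_range, Nat.sub_add_cancel (by omega)]
        exact ⟨by omega, by rw [hj1]; exact hb⟩
      · show P.getVert (j - 1 + 1) = b
        rw [Nat.sub_add_cancel (by omega)]
        exact hj1
  -- S and T intersect
  have hunion : (S ∪ T).card ≤ k := by
    have := Finset.card_le_card
      (Finset.union_subset (Finset.filter_subset _ _) (Finset.filter_subset _ _) :
        S ∪ T ⊆ Finset.range k)
    simpa using this
  have hint : (S ∩ T).Nonempty := by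
    rw [← Finset.card_pos]
    have h2 := Finset.card_union_add_card_inter S T
    omega
  obtain ⟨i, hiST⟩ := hint
  rw [Finset.mem_inter, hSdef, hTdef, Finset.mem_filter, Finset.mem_filter,
    Finset.mem_range] at hiST
  obtain ⟨⟨hik, hav⟩, -, hbu'⟩ := hiST
  -- a vertex outside P
  have hzex : ∃ z, z ∉ P.support := by
    by_contra h
    push_neg at h
    have huniv : P.support.toFinset = Finset.univ :=
      Finset.eq_univ_iff_forall.2 fun z => List.mem_toFinset.2 (h z)
    have h1 : P.support.toFinset.card ≤ P.support.length := List.toFinset_card_le _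
    rw [huniv, Finset.card_univ, Walk.length_support] at h1
    omega
  obtain ⟨z, hz⟩ := hzex
  obtain ⟨x, y, hxy, hx, hy⟩ :=
    (hconn.preconnected z u).elim fun W =>
      Walk.dirac_exists_boundary W P.start_mem_support hz
  -- build the closed walk through all of P's vertices
  set C : G.Walk u u :=
    (P.diracTake i).append
      (Walk.cons hav.symm ((P.drop (i + 1)).reverse.append (Walk.cons hbu'.symm Walk.nil)))
    with hC
  have hCsupp : C.support =
      P.support.take (i + 1) ++ ((P.support.drop (i + 1)).reverse ++ [u]) := by
    rw [hC]
    rw [Walk.support_append, Walk.support_cons, List.tail_cons, Walk.support_append,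
      Walk.support_cons, Walk.support_nil, List.tail_cons, Walk.support_reverse,
      Walk.support_diracTake, Walk.support_drop' _ _ (by omega)]
  have hLcons : P.support = u :: P.support.tail := Walk.support_eq_cons P
  have hCtail : C.support.tail =
      P.support.tail.take i ++ ((P.support.tail.drop i).reverse ++ [u]) := by
    rw [hCsupp]
    conv_lhs => rw [hLcons]
    simp [List.take_succ_cons, List.drop_succ_cons, List.tail_take_eq_take_tail]
  have hperm : List.Perm C.support.tail P.support := by
    rw [hCtail]
    conv_rhs => rw [hLcons]
    have p1 : List.Perm
        (P.support.tail.take i ++ ((P.support.tail.drop i).reverse ++ [u]))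
        (P.support.tail.take i ++ (P.support.tail.drop i ++ [u])) :=
      List.Perm.append_left _ (List.Perm.append_right _ (List.reverse_perm _))
    have p2 : List.Perm ((P.support.tail.take i ++ P.support.tail.drop i) ++ (u :: []))
        (u :: ((P.support.tail.take i ++ P.support.tail.drop i) ++ [])) :=
      List.perm_middle
    refine p1.trans ?_
    rw [← List.append_assoc] at *
    refine p2.trans ?_
    rw [List.append_nil, List.take_append_drop]
  have hyC : y ∈ C.support := by
    rw [Walk.support_eq_cons]
    exact List.mem_cons.2 (Or.inr (hperm.mem_iff.2 hy))
  set C' : G.Walk y y := C.rotate y hyC with hC'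
  have hperm' : List.Perm C'.support.tail P.support :=
    ((Walk.support_rotate C y hyC).perm).trans hperm
  have hlenC' : C'.length = k + 1 := by
    have h1 := hperm'.length_eq
    rw [List.length_tail, Walk.length_support, Walk.length_support] at h1
    omega
  have hnn : ¬C'.Nil := by
    rw [Walk.nil_iff_length_eq, hlenC']
    omega
  have hDsupp : C'.tail.support = C'.support.tail := Walk.support_tail_of_not_nil C' hnn
  have hDpath : C'.tail.IsPath :=
    Walk.IsPath.mk' (by rw [hDsupp]; exact hperm'.nodup_iff.2 hP.support_nodup)
  have hDlen : C'.tail.length + 1 = k + 1 := by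
    rw [Walk.length_tail_add_one hnn, hlenC']
  have hEpath : (Walk.cons hxy C'.tail.reverse).IsPath := by
    rw [Walk.cons_isPath_iff]
    refine ⟨hDpath.reverse, ?_⟩
    rw [Walk.support_reverse, List.mem_reverse, hDsupp]
    exact fun hmem => hx (hperm'.mem_iff.1 hmem)
  have hfin := hlongest _ _ _ hEpath
  rw [Walk.length_cons, Walk.length_reverse] at hfin
  omega
end

section
/- Let G be a finite simple graph, C a connected component of G, and w a vertex of G not in C. Let G' be obtained from G by deleting all edges incident to w and joining w to every vertex of C. If |V(C)| is even and ν(C) = |V(C)|/2 (C has a perfect matching), then ν(G') ≤ ν(G). -/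
/-- The matching number of a graph: the largest number of pairwise disjoint edges. -/
noncomputable def matchingNumber {V : Type*} (G : SimpleGraph V) : ℕ :=
  sSup {k | ∃ M : G.Subgraph, M.IsMatching ∧ M.edgeSet.ncard = k}

open SimpleGraph in
lemma matching_two_mul_ncard {V : Type*} [Fintype V] {G : SimpleGraph V} {M : G.Subgraph}
    (h : M.IsMatching) : M.verts.ncard = 2 * M.edgeSet.ncard := by
  classical
  set f : V → Sym2 V := fun v => if hv : v ∈ M.verts then (h.toEdge ⟨v, hv⟩ : Sym2 V) else s(v, v)
    with hf
  have hmem : ∀ v (hv : v ∈ M.verts) (e : Sym2 V), e ∈ M.edgeSet → (f v = e ↔ v ∈ e) := by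
    intro v hv e he
    induction e with
    | _ a b =>
      rw [SimpleGraph.Subgraph.mem_edgeSet] at he
      constructor
      · intro hfe
        obtain ⟨u, hu, -⟩ := h hv
        have : f v = s(v, u) := by
          simp only [hf, dif_pos hv]
          exact congrArg Subtype.val (h.toEdge_eq_of_adj hu)
        rw [hfe] at this
        rw [this]; simp
      · intro hve
        rcases Sym2.mem_iff.mp hve with rfl | rfl
        · simp only [hf, dif_pos hv]
          exact congrArg Subtype.val (h.toEdge_eq_of_adj he)
        · simp only [hf, dif_pos hv]
          have := congrArg Subtype.val (h.toEdge_eq_of_adj he.symm)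
          exact this.trans (Sym2.eq_swap)
  have hmaps : ∀ v ∈ M.verts.toFinset, f v ∈ M.edgeSet.toFinset := by
    intro v hv
    rw [Set.mem_toFinset] at hv ⊢
    obtain ⟨u, hu, -⟩ := h hv
    have : f v = s(v, u) := by
      simp only [hf, dif_pos hv]
      exact congrArg Subtype.val (h.toEdge_eq_of_adj hu)
    rw [this]; exact hu
  have hfib : ∀ e ∈ M.edgeSet.toFinset, (M.verts.toFinset.filter fun v => f v = e).card = 2 := by
    intro e he
    rw [Set.mem_toFinset] at he
    induction e with
    | _ a b =>
      have hab : M.Adj a b := SimpleGraph.Subgraph.mem_edgeSet.mp he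
      have hane : a ≠ b := (M.adj_sub hab).ne
      have : (M.verts.toFinset.filter fun v => f v = s(a, b)) = {a, b} := by
        ext v
        simp only [Finset.mem_filter, Set.mem_toFinset, Finset.mem_insert, Finset.mem_singleton]
        constructor
        · rintro ⟨hv, hfe⟩
          have := (hmem v hv _ he).mp hfe
          simpa using this
        · rintro (rfl | rfl)
          · exact ⟨M.edge_vert hab, (hmem v (M.edge_vert hab) _ he).mpr (by simp)⟩
          · exact ⟨M.edge_vert hab.symm, (hmem v (M.edge_vert hab.symm) _ he).mpr (by simp)⟩
      rw [this, Finset.card_insert_of_notMem (by simpa using hane), Finset.card_singleton]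
  rw [Set.ncard_eq_toFinset_card', Set.ncard_eq_toFinset_card',
    Finset.card_eq_sum_card_fiberwise hmaps, Finset.sum_congr rfl hfib, Finset.sum_const,
    smul_eq_mul, mul_comm]


theorem redirect_to_perfectly_matched_component {V : Type*} [Fintype V]
    (G : SimpleGraph V) (C : G.ConnectedComponent) (w : V) (hw : w ∉ C.supp)
    (G' : SimpleGraph V)
    (hG' : ∀ a b : V, G'.Adj a b ↔
      ((a = w ∧ b ∈ C.supp) ∨ (b = w ∧ a ∈ C.supp) ∨ (a ≠ w ∧ b ≠ w ∧ G.Adj a b)))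
    (heven : Even C.supp.ncard)
    (hpm : ∃ M : G.Subgraph, M.IsMatching ∧ M.verts = C.supp) :
    matchingNumber G' ≤ matchingNumber G := by
  rw [matchingNumber, matchingNumber]
  classical
  obtain ⟨M, hM, hMverts⟩ := hpm
  set T : Set V := C.supp ∪ {w} with hT
  have hbdd : BddAbove {k | ∃ N : G.Subgraph, N.IsMatching ∧ N.edgeSet.ncard = k} := by
    refine ⟨Nat.card (Sym2 V), ?_⟩
    rintro k ⟨N, -, rfl⟩
    calc N.edgeSet.ncard ≤ (Set.univ : Set (Sym2 V)).ncard :=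
          Set.ncard_le_ncard (Set.subset_univ _) Set.finite_univ
      _ = Nat.card (Sym2 V) := Set.ncard_univ _
  have hne : (0 : ℕ) ∈ {k | ∃ N : G'.Subgraph, N.IsMatching ∧ N.edgeSet.ncard = k} := by
    exact ⟨⊥, fun v hv => by simp at hv, by simp⟩
  apply csSup_le ⟨0, hne⟩
  rintro k ⟨M', hM', rfl⟩
  -- closure of C.supp under G-adjacency
  have hclos : ∀ a b : V, G.Adj a b → a ∈ C.supp → b ∈ C.supp := by
    intro a b hab ha
    rw [SimpleGraph.ConnectedComponent.mem_supp_iff] at ha ⊢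
    rw [← ha]
    exact SimpleGraph.ConnectedComponent.sound hab.symm.reachable
  -- edges of M' have both endpoints in T or both outside T
  have hpart : ∀ a b : V, M'.Adj a b → a ∈ T → b ∈ T := by
    intro a b hab haT
    have hG'ab := (hG' a b).mp (M'.adj_sub hab)
    rcases haT with haC | haw
    · have haw : a ≠ w := fun h => hw (h ▸ haC)
      rcases hG'ab with ⟨h1, -⟩ | ⟨h1, -⟩ | ⟨-, -, h3⟩
      · exact absurd h1 haw
      · exact Or.inr (by simp [h1])
      · exact Or.inl (hclos a b h3 haC)
    · simp only [Set.mem_singleton_iff] at haw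
      subst haw
      rcases hG'ab with ⟨-, h1⟩ | ⟨h1, h2⟩ | ⟨h1, -, -⟩
      · exact Or.inl h1
      · exact absurd h2 hw
      · exact absurd rfl h1
  -- the outside part of M' as a subgraph of G
  have houtadj : ∀ a b : V, M'.Adj a b ∧ a ∉ T ∧ b ∉ T → G.Adj a b := by
    rintro a b ⟨hab, haT, hbT⟩
    have haw : a ≠ w := fun h => haT (h ▸ Or.inr rfl)
    have hbw : b ≠ w := fun h => hbT (h ▸ Or.inr rfl)
    rcases (hG' a b).mp (M'.adj_sub hab) with ⟨h1, -⟩ | ⟨h1, -⟩ | ⟨-, -, h3⟩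
    · exact absurd h1 haw
    · exact absurd h1 hbw
    · exact h3
  set Mout : G.Subgraph :=
    { verts := M'.verts \ T
      Adj := fun a b => M'.Adj a b ∧ a ∉ T ∧ b ∉ T
      adj_sub := fun h => houtadj _ _ h
      edge_vert := fun ⟨hab, haT, _⟩ => ⟨M'.edge_vert hab, haT⟩
      symm := ⟨fun a b ⟨hab, haT, hbT⟩ => ⟨hab.symm, hbT, haT⟩⟩ } with hMout
  have hMoutM : Mout.IsMatching := by
    rintro v ⟨hv, hvT⟩
    obtain ⟨u, hu, huniq⟩ := hM' hv
    have huT : u ∉ T := fun huT => hvT (hpart u v hu.symm huT)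
    exact ⟨u, ⟨hu, hvT, huT⟩, fun y hy => huniq y hy.1⟩
  -- the inside part of M' as a subgraph of G'
  set Min : G'.Subgraph :=
    { verts := M'.verts ∩ T
      Adj := fun a b => M'.Adj a b ∧ a ∈ T ∧ b ∈ T
      adj_sub := fun h => M'.adj_sub h.1
      edge_vert := fun ⟨hab, haT, _⟩ => ⟨M'.edge_vert hab, haT⟩
      symm := ⟨fun a b ⟨hab, haT, hbT⟩ => ⟨hab.symm, hbT, haT⟩⟩ } with hMin
  have hMinM : Min.IsMatching := by
    rintro v ⟨hv, hvT⟩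
    obtain ⟨u, hu, huniq⟩ := hM' hv
    exact ⟨u, ⟨hu, hvT, hpart v u hu hvT⟩, fun y hy => huniq y hy.1⟩
  -- the combined matching of G
  have hdisj : Disjoint M.support Mout.support := by
    rw [hM.support_eq_verts, hMoutM.support_eq_verts, hMverts]
    rw [Set.disjoint_left]
    rintro a ha ⟨-, haT⟩
    exact haT (Or.inl ha)
  have hN : (M ⊔ Mout).IsMatching := hM.sup hMoutM hdisj
  -- edge set facts
  have hedisj : Disjoint M.edgeSet Mout.edgeSet := by
    rw [Set.disjoint_left]
    intro e he he'
    induction e with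
    | _ a b =>
      rw [SimpleGraph.Subgraph.mem_edgeSet] at he he'
      exact he'.2.1 (Or.inl (hMverts ▸ M.edge_vert he))
  have heN : (M ⊔ Mout).edgeSet = M.edgeSet ∪ Mout.edgeSet := SimpleGraph.Subgraph.edgeSet_sup
  have hedisj' : Disjoint Min.edgeSet Mout.edgeSet := by
    rw [Set.disjoint_left]
    intro e he he'
    induction e with
    | _ a b =>
      rw [SimpleGraph.Subgraph.mem_edgeSet] at he he'
      exact he'.2.1 he.2.1
  have heM' : M'.edgeSet = Min.edgeSet ∪ Mout.edgeSet := by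
    ext e
    induction e with
    | _ a b =>
      simp only [Set.mem_union, SimpleGraph.Subgraph.mem_edgeSet]
      constructor
      · intro hab
        by_cases haT : a ∈ T
        · exact Or.inl ⟨hab, haT, hpart a b hab haT⟩
        · refine Or.inr ⟨hab, haT, fun hbT => haT (hpart b a hab.symm hbT)⟩
      · rintro (h | h) <;> exact h.1
  -- counting
  have hMcard : M.verts.ncard = 2 * M.edgeSet.ncard := matching_two_mul_ncard hM
  have hMincard : Min.verts.ncard = 2 * Min.edgeSet.ncard := matching_two_mul_ncard hMinM
  have hMinle : Min.verts.ncard ≤ C.supp.ncard + 1 := by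
    have : Min.verts ⊆ T := fun v hv => hv.2
    calc Min.verts.ncard ≤ T.ncard := Set.ncard_le_ncard this (Set.toFinite _)
      _ ≤ C.supp.ncard + 1 := by
          rw [hT]
          exact le_trans (Set.ncard_union_le _ _) (by simp)
  obtain ⟨m, hm⟩ := heven
  have hkey : Min.edgeSet.ncard ≤ M.edgeSet.ncard := by
    rw [hMverts] at hMcard
    omega
  have hcard : M'.edgeSet.ncard ≤ (M ⊔ Mout).edgeSet.ncard := by
    rw [heM', heN, Set.ncard_union_eq hedisj' (Set.toFinite _) (Set.toFinite _),
      Set.ncard_union_eq hedisj (Set.toFinite _) (Set.toFinite _)]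
    omega
  exact le_trans hcard (le_csSup hbdd ⟨M ⊔ Mout, hN, rfl⟩)
end

section
/- Let C be a connected graph with minimum degree at least p (p ≥ 2) that contains no path on 2p vertices. Then p+1 ≤ |V(C)| ≤ 2p-1 and C contains a Hamiltonian path (a path on |V(C)| vertices). -/
/-- `G` contains a path on `k` vertices. -/
def containsPathOn {α : Type*} (G : SimpleGraph α) (k : ℕ) : Prop :=
  ∃ (u v : α) (w : G.Walk u v), w.IsPath ∧ w.length + 1 = k

/-- A nonempty list whose consecutive elements are adjacent is the support of some walk. -/
lemma exists_walk_support {V : Type*} (C : SimpleGraph V) :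
    ∀ (l : List V), l ≠ [] → l.Chain' C.Adj →
      ∃ (a b : V) (w : C.Walk a b), w.support = l
  | [], h, _ => absurd rfl h
  | [a], _, _ => ⟨a, a, SimpleGraph.Walk.nil, rfl⟩
  | a :: b :: t, _, hc => by
      obtain ⟨hab, hc'⟩ := List.isChain_cons_cons.mp hc
      obtain ⟨a', b', w, hw⟩ := exists_walk_support C (b :: t) (by simp) hc'
      have ha' : a' = b := by
        have := w.support_eq_cons
        rw [this] at hw
        exact (List.cons.injEq _ _ _ _ ▸ hw).1
      subst ha'
      exact ⟨a, b', SimpleGraph.Walk.cons hab w, by simp [hw]⟩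

theorem component_structure_even_path {V : Type*} [Fintype V]
    (C : SimpleGraph V) [DecidableRel C.Adj] (p : ℕ) (hp : 2 ≤ p)
    (hconn : C.Connected) (hdeg : ∀ v : V, p ≤ C.degree v)
    (hfree : ¬ containsPathOn C (2 * p)) :
    p + 1 ≤ Fintype.card V ∧ Fintype.card V ≤ 2 * p - 1 ∧
      ∃ (u v : V) (w : C.Walk u v), w.IsPath ∧ ∀ x : V, x ∈ w.support := by
  classical
  obtain ⟨v⟩ := hconn.nonempty
  set N := Fintype.card V with hN
  -- P n : there is a "path list" on n+1 vertices
  set P : ℕ → Prop := fun n => ∃ l : List V, l.Chain' C.Adj ∧ l.Nodup ∧ l.length = n + 1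
    with hPdef
  have hP0 : P 0 := ⟨[v], List.isChain_singleton v, List.nodup_singleton v, rfl⟩
  have hbound : ∀ m, P m → m ≤ N := by
    rintro m ⟨l, -, hnd, hlen⟩
    have := hnd.length_le_card
    omega
  set k := Nat.findGreatest P N with hk
  have hPk : P k := Nat.findGreatest_spec (hbound 0 hP0) hP0
  have hmax : ∀ m, P m → m ≤ k := fun m hm => Nat.le_findGreatest (hbound m hm) hm
  obtain ⟨L, hchain, hnodup, hlen⟩ := hPk
  have hLne : L ≠ [] := by intro h; rw [h] at hlen; simp at hlen
  -- extension lemma: neighbors of the head of a maximal path list lie in the list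
  have extend : ∀ (l : List V) (hl : l ≠ []), l.Chain' C.Adj → l.Nodup → l.length = k + 1 →
      ∀ x, C.Adj (l.head hl) x → x ∈ l := by
    intro l hl hc hn hln x hadj
    by_contra hx
    have hP : P (k + 1) := by
      refine ⟨x :: l, ?_, List.nodup_cons.mpr ⟨hx, hn⟩, by simp [hln]⟩
      refine hc.cons ?_
      intro y hy
      rw [List.head?_eq_head hl] at hy
      have : y = l.head hl := by simpa using hy.symm
      rw [this]
      exact hadj.symm
    have := hmax _ hP
    omega
  set v₀ := L.head hLne with hv₀
  set vk := L.getLast hLne with hvk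
  have hchainrev : L.reverse.Chain' C.Adj := by
    show L.reverse.IsChain C.Adj
    rw [List.isChain_reverse]
    exact hchain.imp fun a b h => h.symm
  have hLrne : L.reverse ≠ [] := by simpa using hLne
  have hheadrev : L.reverse.head hLrne = vk := by
    rw [List.head_reverse]
  have extend0 : ∀ x, C.Adj v₀ x → x ∈ L := extend L hLne hchain hnodup hlen
  have extendk : ∀ x, C.Adj vk x → x ∈ L := by
    intro x hx
    have := extend L.reverse hLrne hchainrev (by simpa using hnodup) (by simpa using hlen) x
      (by rw [hheadrev]; exact hx)
    simpa using this
  -- k ≥ 1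
  have hk1 : 1 ≤ k := by
    by_contra h
    have hk0 : k = 0 := by omega
    rw [hk0] at hlen
    obtain ⟨a, ha⟩ := List.length_eq_one_iff.mp hlen
    have hdega : 0 < C.degree a := lt_of_lt_of_le (by omega) (hdeg a)
    obtain ⟨b, hb⟩ := (SimpleGraph.degree_pos_iff_exists_adj (G := C) (v := a)).mp hdega
    have h1 : v₀ ∈ L := List.head_mem hLne
    rw [ha, List.mem_singleton] at h1
    have h2 : b ∈ L := extend0 b (by rw [h1]; exact hb)
    rw [ha, List.mem_singleton] at h2
    exact C.irrefl (by rw [h2] at hb; exact hb)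
  -- Lower bound
  have hcardL : L.toFinset.card = k + 1 := by
    rw [List.toFinset_card_of_nodup hnodup, hlen]
  have hlow : p + 1 ≤ k + 1 := by
    have hsub : insert v₀ (C.neighborFinset v₀) ⊆ L.toFinset := by
      intro x hx
      rcases Finset.mem_insert.mp hx with h | h
      · subst h; exact List.mem_toFinset.mpr (List.head_mem hLne)
      · exact List.mem_toFinset.mpr (extend0 x (C.mem_neighborFinset _ _ |>.mp h))
    have hcard : (insert v₀ (C.neighborFinset v₀)).card = C.degree v₀ + 1 := by
      rw [Finset.card_insert_of_notMem (by simp)]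
      rfl
    have h1 := Finset.card_le_card hsub
    rw [hcard, hcardL] at h1
    have h2 := hdeg v₀
    omega
  have hlowN : p + 1 ≤ N := by
    have h3 := hnodup.length_le_card
    rw [hlen] at h3
    omega
  -- Upper bound on k
  have hkup : k ≤ 2 * p - 2 := by
    by_contra h
    have h2p : 2 * p ≤ k + 1 := by omega
    have hlen' : (L.take (2 * p)).length = 2 * p := by
      rw [List.length_take, hlen]; omega
    have hne' : L.take (2 * p) ≠ [] := by
      intro hc; rw [hc] at hlen'; simp at hlen'; omega
    obtain ⟨a, b, w, hw⟩ := exists_walk_support C (L.take (2 * p)) hne' (hchain.take _)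
    refine hfree ⟨a, b, w, ?_, ?_⟩
    · rw [SimpleGraph.Walk.isPath_def, hw]
      exact hnodup.sublist (List.take_sublist _ _)
    · have := w.length_support
      rw [hw, hlen'] at this
      omega
  -- Spanning: every vertex is in L
  have hspan : ∀ x : V, x ∈ L := by
    by_contra h
    push_neg at h
    obtain ⟨y, hy⟩ := h
    -- indices of neighbors
    have hidx : ∀ x ∈ L, L.idxOf x < k + 1 := by
      intro x hx
      have := List.idxOf_lt_length_iff.mpr hx
      omega
    have hv0idx : L.idxOf v₀ = 0 := by
      rw [hv₀, ← List.getElem_zero (by rw [hlen]; omega)]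
      exact List.Nodup.idxOf_getElem hnodup 0 _
    have hvkidx : L.idxOf vk = k := by
      have : vk = L[k]'(by omega) := by
        rw [hvk, List.getLast_eq_getElem]
        congr 1
        omega
      rw [this]
      exact List.Nodup.idxOf_getElem hnodup k _
    set S : Finset ℕ := (C.neighborFinset v₀).image (fun x => L.idxOf x - 1) with hS
    set T : Finset ℕ := (C.neighborFinset vk).image (fun x => L.idxOf x) with hT
    have hS1 : ∀ x ∈ C.neighborFinset v₀, 1 ≤ L.idxOf x := by
      intro x hx
      have hadj : C.Adj v₀ x := (C.mem_neighborFinset _ _).mp hx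
      have hxL : x ∈ L := extend0 x hadj
      have : L.idxOf x ≠ 0 := by
        intro hc
        have : x = v₀ := List.idxOf_inj hxL |>.mp (by rw [hc, hv0idx])
        exact C.irrefl (this ▸ hadj)
      omega
    have hScard : p ≤ S.card := by
      rw [hS, Finset.card_image_of_injOn]
      · exact hdeg v₀
      · intro x hx y hy hxy
        have hxy' : L.idxOf x - 1 = L.idxOf y - 1 := hxy
        have h1 := hS1 x hx
        have h2 := hS1 y hy
        have : L.idxOf x = L.idxOf y := by omega
        exact (List.idxOf_inj (extend0 x ((C.mem_neighborFinset _ _).mp hx))).mp this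
    have hTcard : p ≤ T.card := by
      rw [hT, Finset.card_image_of_injOn]
      · exact hdeg vk
      · intro x hx y hy hxy
        exact (List.idxOf_inj (extendk x ((C.mem_neighborFinset _ _).mp hx))).mp hxy
    have hSsub : S ⊆ Finset.range k := by
      intro i hi
      obtain ⟨x, hx, hix⟩ := Finset.mem_image.mp hi
      have hix' : L.idxOf x - 1 = i := hix
      have h1 := hidx x (extend0 x ((C.mem_neighborFinset _ _).mp hx))
      have h2 := hS1 x hx
      rw [Finset.mem_range]
      omega
    have hTsub : T ⊆ Finset.range k := by
      intro i hi
      obtain ⟨x, hx, hix⟩ := Finset.mem_image.mp hi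
      have hix' : L.idxOf x = i := hix
      have hadj : C.Adj vk x := (C.mem_neighborFinset _ _).mp hx
      have hxL : x ∈ L := extendk x hadj
      have h1 := hidx x hxL
      have h2 : L.idxOf x ≠ k := by
        intro hc
        have : x = vk := (List.idxOf_inj hxL).mp (by rw [hc, hvkidx])
        exact C.irrefl (this ▸ hadj)
      rw [Finset.mem_range]
      omega
    -- pigeonhole
    have hinter : (S ∩ T).Nonempty := by
      by_contra hc
      rw [Finset.not_nonempty_iff_eq_empty] at hc
      have hST := Finset.card_union_add_card_inter S T
      have hU : (S ∪ T).card ≤ k := by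
        have := Finset.card_le_card (Finset.union_subset hSsub hTsub)
        simpa using this
      rw [hc] at hST
      simp at hST
      omega
    obtain ⟨i, hi⟩ := hinter
    obtain ⟨x, hxmem, hxi⟩ := Finset.mem_image.mp (Finset.mem_inter.mp hi).1
    obtain ⟨z', hzmem, hzi⟩ := Finset.mem_image.mp (Finset.mem_inter.mp hi).2
    have hik : i < k := Finset.mem_range.mp (hSsub (Finset.mem_inter.mp hi).1)
    have hadjx : C.Adj v₀ x := (C.mem_neighborFinset _ _).mp hxmem
    have hadjz : C.Adj vk z' := (C.mem_neighborFinset _ _).mp hzmem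
    have hxL : x ∈ L := extend0 x hadjx
    have hzL : z' ∈ L := extendk z' hadjz
    have hxi' : L.idxOf x - 1 = i := hxi
    have hzi' : L.idxOf z' = i := hzi
    have hxidx : L.idxOf x = i + 1 := by have := hS1 x hxmem; omega
    have hL_i : L[i]? = some z' := by
      rw [← hzi']; exact List.getElem?_idxOf hzL
    have hL_i1 : L[i + 1]? = some x := by
      rw [← hxidx]; exact List.getElem?_idxOf hxL
    set A1 := L.take (i + 1) with hA1
    set A2 := L.drop (i + 1) with hA2
    have hA1len : A1.length = i + 1 := by rw [hA1, List.length_take, hlen]; omega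
    have hA2len : A2.length = k - i := by rw [hA2, List.length_drop, hlen]; omega
    have hA1ne : A1 ≠ [] := by intro hc; rw [hc] at hA1len; simp at hA1len
    have hA2ne : A2 ≠ [] := by intro hc; rw [hc] at hA2len; simp at hA2len; omega
    have hsplit : A1 ++ A2 = L := List.take_append_drop _ _
    have hlastL : L.getLast? = some vk := by
      rw [hvk]; exact List.getLast?_eq_getLast_of_ne_nil hLne
    have hA1last : A1.getLast? = some z' := by
      rw [hA1, List.getLast?_take, if_neg (Nat.succ_ne_zero i)]
      simp [hL_i]
    have hA2head : A2.head? = some x := by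
      rw [hA2, List.head?_eq_getElem?, List.getElem?_drop]
      simpa using hL_i1
    have hA1head : A1.head? = some v₀ := by
      rw [hA1, List.head?_take, if_neg (Nat.succ_ne_zero i), List.head?_eq_head hLne, hv₀]
    have hA2last : A2.getLast? = some vk := by
      have h1 : (A1 ++ A2).getLast? = A2.getLast? := by
        rw [List.getLast?_append, List.getLast?_eq_getLast_of_ne_nil hA2ne, Option.some_or]
      rw [hsplit] at h1
      rw [← h1, hlastL]
    set M := A1 ++ A2.reverse with hM
    have hMperm : M.Perm L := by
      rw [hM, ← hsplit]
      exact List.Perm.append_left A1 (List.reverse_perm A2)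
    have hMnodup : M.Nodup := hMperm.nodup_iff.mpr hnodup
    have hMlen : M.length = k + 1 := by rw [hMperm.length_eq, hlen]
    have hMhead : M.head? = some v₀ := by
      rw [hM, List.head?_append, hA1head, Option.some_or]
    have hMlast : M.getLast? = some x := by
      rw [hM, List.getLast?_append, List.getLast?_reverse, hA2head, Option.some_or]
    have hchain' := hchain
    rw [← hsplit] at hchain'
    have hMchain : M.Chain' C.Adj := by
      rw [hM]
      refine List.IsChain.append hchain'.left_of_append ?_ ?_
      · rw [List.isChain_reverse]
        exact hchain'.right_of_append.imp fun a b h => h.symm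
      · intro a ha b hb
        rw [hA1last, Option.mem_some_iff] at ha
        rw [List.head?_reverse, hA2last, Option.mem_some_iff] at hb
        rw [← ha, ← hb]
        exact hadjz.symm
    have hmemM : ∀ w, w ∈ M ↔ w ∈ L := fun w => hMperm.mem_iff
    -- find a boundary edge from outside M into M
    have boundary : ∀ {a b : V} (q : C.Walk a b), a ∉ M → b ∈ M →
        ∃ y' z, y' ∉ M ∧ z ∈ M ∧ C.Adj y' z := by
      intro a b q
      induction q with
      | nil => intro ha hb; exact absurd hb ha
      | @cons u w₁ w₂ h q ih =>
        intro ha hb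
        by_cases hc : w₁ ∈ M
        · exact ⟨u, w₁, ha, hc, h⟩
        · exact ih hc hb
    obtain ⟨q⟩ := hconn.preconnected y v₀
    obtain ⟨y', z, hy', hz, hadjyz⟩ := boundary q (fun hc => hy ((hmemM y).mp hc))
      ((hmemM v₀).mpr (List.head_mem hLne))
    -- rotate M to start at z
    obtain ⟨B1, B2, hB⟩ := List.append_of_mem hz
    set M' := (z :: B2) ++ B1 with hM'
    have hM'perm : M'.Perm M := by
      rw [hM', hB]
      exact List.perm_append_comm
    have hzB2last : (z :: B2).getLast? = some x := by
      have h1 := hMlast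
      rw [hB, List.getLast?_append,
        List.getLast?_eq_getLast_of_ne_nil (l := z :: B2) (by simp), Option.some_or] at h1
      rw [List.getLast?_eq_getLast_of_ne_nil (l := z :: B2) (by simp)]
      exact h1
    have hMBchain := hMchain
    rw [hB] at hMBchain
    have hM'chain : M'.Chain' C.Adj := by
      rw [hM']
      refine List.IsChain.append hMBchain.right_of_append hMBchain.left_of_append ?_
      intro a ha b hb
      rw [hzB2last, Option.mem_some_iff] at ha
      have hbv : b = v₀ := by
        have h1 := hMhead
        rw [hB, List.head?_append, Option.mem_def.mp hb, Option.some_or] at h1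
        simpa using h1
      rw [← ha, hbv]
      exact hadjx.symm
    -- the longer path
    set F := y' :: M' with hF
    have hFchain : F.Chain' C.Adj := by
      refine hM'chain.cons ?_
      intro b hb
      rw [hM', List.head?_append] at hb
      simp only [List.head?_cons, Option.some_or, Option.mem_some_iff] at hb
      rw [← hb]
      exact hadjyz
    have hFnodup : F.Nodup := by
      rw [hF, List.nodup_cons]
      exact ⟨fun hc => hy' (hM'perm.mem_iff.mp hc), hM'perm.nodup_iff.mpr hMnodup⟩
    have hFlen : F.length = (k + 1) + 1 := by
      rw [hF, List.length_cons, hM'perm.length_eq, hMlen]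
    have : P (k + 1) := ⟨F, hFchain, hFnodup, hFlen⟩
    have := hmax _ this
    omega
  -- conclude
  have hNk : N = k + 1 := by
    have : L.toFinset = Finset.univ := Finset.eq_univ_iff_forall.mpr
      fun x => List.mem_toFinset.mpr (hspan x)
    rw [hN, ← Finset.card_univ, ← this, hcardL]
  refine ⟨by omega, by omega, ?_⟩
  obtain ⟨a, b, w, hw⟩ := exists_walk_support C L hLne hchain
  exact ⟨a, b, w, by rw [SimpleGraph.Walk.isPath_def, hw]; exact hnodup,
    fun x => by rw [hw]; exact hspan x⟩
end

section
/- For integers k ≥ 1, p ≥ 2, and n ≥ k(2p-1)+1, the number of triangles (3-cliques) in (k·K_{2p-1}) ∨ I_{n-k(2p-1)} is strictly greater than the number of triangles in (k·K_{2p-1} ∪ K_1) ∨ I_{n-k(2p-1)-1}. -/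
/-- The join `G ∨ H` of two graphs, on the sum type. -/
def joinG {α β : Type*} (G : SimpleGraph α) (H : SimpleGraph β) : SimpleGraph (α ⊕ β) :=
  SimpleGraph.fromRel (fun x y => match x, y with
    | Sum.inl a, Sum.inl a' => G.Adj a a'
    | Sum.inl _, Sum.inr _ => True
    | Sum.inr b, Sum.inr b' => H.Adj b b'
    | _, _ => False)

/-- The disjoint union of two graphs, on the sum type. -/
def sumG {α β : Type*} (G : SimpleGraph α) (H : SimpleGraph β) : SimpleGraph (α ⊕ β) :=
  SimpleGraph.fromRel (fun x y => match x, y with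
    | Sum.inl a, Sum.inl a' => G.Adj a a'
    | Sum.inr b, Sum.inr b' => H.Adj b b'
    | _, _ => False)

/-- `k` disjoint copies of the graph `G`. -/
def copiesG (k : ℕ) {α : Type*} (G : SimpleGraph α) : SimpleGraph (Fin k × α) :=
  SimpleGraph.fromRel (fun x y => x.1 = y.1 ∧ G.Adj x.2 y.2)

/-- The number of `r`-cliques of a graph. -/
noncomputable def cliqueCount {α : Type*} (G : SimpleGraph α) (r : ℕ) : ℕ :=
  {t : Finset α | G.IsNClique r t}.ncard

section Aux

variable {k N m : ℕ}

/-- Graph A: `(k·K_N ∪ K_1) ∨ I_{m-1}`. -/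
abbrev GA (k N m : ℕ) :
    SimpleGraph (((Fin k × Fin N) ⊕ Fin 1) ⊕ Fin (m - 1)) :=
  joinG (sumG (copiesG k (⊤ : SimpleGraph (Fin N))) (⊥ : SimpleGraph (Fin 1)))
    (⊥ : SimpleGraph (Fin (m - 1)))

/-- Graph B: `k·K_N ∨ I_m`. -/
abbrev GB (k N m : ℕ) : SimpleGraph ((Fin k × Fin N) ⊕ Fin m) :=
  joinG (copiesG k (⊤ : SimpleGraph (Fin N))) (⊥ : SimpleGraph (Fin m))

lemma GB_adj_ll (u v : Fin k × Fin N) :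
    (GB k N m).Adj (Sum.inl u) (Sum.inl v) ↔ u ≠ v ∧ u.1 = v.1 := by
  by_cases huv : u = v
  · subst huv; simp
  · have h2 : u.2 = v.2 → u.1 = v.1 → False := fun h h' => huv (Prod.ext h' h)
    simp [GB, joinG, copiesG, SimpleGraph.fromRel_adj, huv, Ne.symm huv]
    constructor
    · rintro ((⟨h3,-⟩|⟨h3,-⟩)|(⟨h3,-⟩|⟨h3,-⟩)) <;> first | exact h3 | exact h3.symm
    · intro h
      exact Or.inl (Or.inl ⟨h, fun h' => h2 h' h⟩)

lemma GB_adj_lr (u : Fin k × Fin N) (i : Fin m) :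
    (GB k N m).Adj (Sum.inl u) (Sum.inr i) := by
  simp [GB, joinG, SimpleGraph.fromRel_adj]

lemma GB_adj_rr (i j : Fin m) : ¬ (GB k N m).Adj (Sum.inr i) (Sum.inr j) := by
  simp [GB, joinG, SimpleGraph.fromRel_adj]

lemma GA_adj_ll (u v : Fin k × Fin N) :
    (GA k N m).Adj (Sum.inl (Sum.inl u)) (Sum.inl (Sum.inl v)) ↔ u ≠ v ∧ u.1 = v.1 := by
  by_cases huv : u = v
  · subst huv; simp
  · have h2 : u.2 = v.2 → u.1 = v.1 → False := fun h h' => huv (Prod.ext h' h)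
    simp [GA, joinG, sumG, copiesG, SimpleGraph.fromRel_adj, huv, Ne.symm huv]
    constructor
    · intro h
      rcases h with h | h <;> rcases h with h | h <;> rcases h with h | h <;>
        first | exact h.1 | exact h.1.symm
    · intro h
      exact Or.inl (Or.inl (Or.inl ⟨h, fun h' => h2 h' h⟩))

lemma GA_adj_rr (i j : Fin (m - 1)) :
    ¬ (GA k N m).Adj (Sum.inr i) (Sum.inr j) := by
  simp [GA, joinG, SimpleGraph.fromRel_adj]

/-- The `K_1` vertex is adjacent in `GA` only to the independent-set vertices. -/
lemma GA_adj_k1 (q : Fin 1) (w : ((Fin k × Fin N) ⊕ Fin 1) ⊕ Fin (m - 1))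
    (h : (GA k N m).Adj (Sum.inl (Sum.inr q)) w) : ∃ i, w = Sum.inr i := by
  rcases w with (u | q') | i
  · exfalso
    simp [GA, joinG, sumG, SimpleGraph.fromRel_adj] at h
  · exfalso
    simp [GA, joinG, sumG, SimpleGraph.fromRel_adj] at h
  · exact ⟨i, rfl⟩

/-- The `K_1` vertex lies in no triangle of `GA`. -/
lemma k1_not_in_triangle {S : Finset (((Fin k × Fin N) ⊕ Fin 1) ⊕ Fin (m - 1))}
    (hS : (GA k N m).IsNClique 3 S) (q : Fin 1) :
    Sum.inl (Sum.inr q) ∉ S := by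
  intro hq
  set z : ((Fin k × Fin N) ⊕ Fin 1) ⊕ Fin (m - 1) := Sum.inl (Sum.inr q) with hz
  obtain ⟨a, b, c, hab, hac, hbc, habc⟩ := Finset.card_eq_three.mp hS.card_eq
  have hclique := hS.isClique
  -- z is one of a, b, c; get the other two, x and y, both adjacent to z and to each other
  have key : ∀ x y : ((Fin k × Fin N) ⊕ Fin 1) ⊕ Fin (m - 1),
      (GA k N m).Adj z x → (GA k N m).Adj z y → ¬ (GA k N m).Adj x y := by
    intro x y hx hy
    obtain ⟨i, rfl⟩ := GA_adj_k1 q x hx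
    obtain ⟨j, rfl⟩ := GA_adj_k1 q y hy
    exact GA_adj_rr i j
  have hmem : ∀ w ∈ S, w ∈ S → True := fun _ _ _ => trivial
  subst habc
  simp only [Finset.mem_insert, Finset.mem_singleton] at hq
  have adj : ∀ x ∈ ({a, b, c} : Finset _), ∀ y ∈ ({a, b, c} : Finset _), x ≠ y →
      (GA k N m).Adj x y := fun x hx y hy => hclique hx hy
  rcases hq with rfl | rfl | rfl
  · exact key b c (adj z (by simp) b (by simp) hab) (adj z (by simp) c (by simp) hac)
      (adj b (by simp) c (by simp) hbc)
  · exact key a c ((adj z (by simp) a (by simp) (Ne.symm hab))) (adj z (by simp) c (by simp) hbc)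
      (adj a (by simp) c (by simp) hac)
  · exact key a b (adj z (by simp) a (by simp) (Ne.symm hac)) (adj z (by simp) b (by simp) (Ne.symm hbc))
      (adj a (by simp) b (by simp) hab)

/-- The vertex embedding from `GA`'s vertex set to `GB`'s. -/
def emb (k N m : ℕ) (hm : 1 ≤ m) :
    (((Fin k × Fin N) ⊕ Fin 1) ⊕ Fin (m - 1)) ↪ ((Fin k × Fin N) ⊕ Fin m) where
  toFun x := match x with
    | Sum.inl (Sum.inl u) => Sum.inl u
    | Sum.inl (Sum.inr _) => Sum.inr ⟨0, hm⟩
    | Sum.inr i => Sum.inr ⟨i.1 + 1, by omega⟩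
  inj' := by
    rintro ((u | q) | i) ((v | q') | j) h <;> simp_all
    · exact Fin.ext (by omega)
    · exact Fin.ext (Nat.succ_injective (by simpa using h))

lemma emb_maps_triangles (hm : 1 ≤ m)
    {S : Finset (((Fin k × Fin N) ⊕ Fin 1) ⊕ Fin (m - 1))}
    (hS : (GA k N m).IsNClique 3 S) :
    (GB k N m).IsNClique 3 (S.map (emb k N m hm)) := by
  constructor
  · rintro x hx y hy hxy
    simp only [Finset.coe_map, Set.mem_image, Finset.mem_coe] at hx hy
    obtain ⟨a, ha, rfl⟩ := hx
    obtain ⟨b, hb, rfl⟩ := hy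
    have hab : a ≠ b := fun h => hxy (by rw [h])
    have hadj : (GA k N m).Adj a b := hS.isClique ha hb hab
    have hqa : ∀ q : Fin 1, a ≠ Sum.inl (Sum.inr q) := by
      intro q h; exact k1_not_in_triangle hS q (h ▸ ha)
    have hqb : ∀ q : Fin 1, b ≠ Sum.inl (Sum.inr q) := by
      intro q h; exact k1_not_in_triangle hS q (h ▸ hb)
    rcases a with (u | q) | i
    · rcases b with (v | q') | j
      · have := (GA_adj_ll u v).mp hadj
        exact (GB_adj_ll u v).mpr this
      · exact absurd rfl (hqb q')
      · exact GB_adj_lr u _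
    · exact absurd rfl (hqa q)
    · rcases b with (v | q') | j
      · exact ((GB_adj_lr (m := m) v ⟨i.1 + 1, by omega⟩).symm)
      · exact absurd rfl (hqb q')
      · exact absurd hadj (GA_adj_rr i j)
  · rw [Finset.card_map]; exact hS.card_eq

/-- The witness triangle in `GB` not hit by the embedding. -/
lemma witness_triangle (hk : 1 ≤ k) (hN : 3 ≤ N) (hm : 1 ≤ m) :
    (GB k N m).IsNClique 3
      ({Sum.inl (⟨0, hk⟩, ⟨0, by omega⟩), Sum.inl (⟨0, hk⟩, ⟨1, by omega⟩),
        Sum.inr ⟨0, hm⟩} : Finset ((Fin k × Fin N) ⊕ Fin m)) := by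
  constructor
  · intro x hx y hy hxy
    simp only [Finset.coe_insert, Set.mem_insert_iff, Finset.coe_singleton,
      Set.mem_singleton_iff] at hx hy
    rcases hx with rfl | rfl | rfl <;> rcases hy with rfl | rfl | rfl <;>
      first
        | exact absurd rfl hxy
        | exact GB_adj_lr _ _
        | exact (GB_adj_lr _ _).symm
        | · rw [GB_adj_ll]
            exact ⟨fun h => by simp [Prod.ext_iff, Fin.ext_iff] at h, rfl⟩
  · exact Finset.card_eq_three.mpr ⟨_, _, _, by simp [Fin.ext_iff], by simp, by simp, rfl⟩

lemma main_lemma (k N m : ℕ) (hk : 1 ≤ k) (hN : 3 ≤ N) (hm : 1 ≤ m) :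
    cliqueCount (GA k N m) 3 < cliqueCount (GB k N m) 3 := by
  classical
  set TA : Set (Finset (((Fin k × Fin N) ⊕ Fin 1) ⊕ Fin (m - 1))) :=
    {t | (GA k N m).IsNClique 3 t} with hTA
  set TB : Set (Finset ((Fin k × Fin N) ⊕ Fin m)) :=
    {t | (GB k N m).IsNClique 3 t} with hTB
  set F : Finset (((Fin k × Fin N) ⊕ Fin 1) ⊕ Fin (m - 1)) →
      Finset ((Fin k × Fin N) ⊕ Fin m) := fun S => S.map (emb k N m hm) with hF
  have hinj : Function.Injective F := Finset.map_injective _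
  have himsub : F '' TA ⊆ TB := by
    rintro _ ⟨S, hS, rfl⟩
    exact emb_maps_triangles hm hS
  set W : Finset ((Fin k × Fin N) ⊕ Fin m) :=
    {Sum.inl (⟨0, hk⟩, ⟨0, by omega⟩), Sum.inl (⟨0, hk⟩, ⟨1, by omega⟩),
      Sum.inr ⟨0, hm⟩} with hW
  have hWB : W ∈ TB := witness_triangle hk hN hm
  have hWnot : W ∉ F '' TA := by
    rintro ⟨S, hS, hFS⟩
    have hmem : (Sum.inr ⟨0, hm⟩ : (Fin k × Fin N) ⊕ Fin m) ∈ F S := by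
      rw [hFS]; simp [hW]
    simp only [hF, Finset.mem_map] at hmem
    obtain ⟨a, ha, hea⟩ := hmem
    rcases a with (u | q) | i
    · simp [emb] at hea
    · exact k1_not_in_triangle hS q ha
    · simp only [emb, Function.Embedding.coeFn_mk, Sum.inr.injEq] at hea
      have := congrArg Fin.val (Sum.inr.inj (hea : (Sum.inr ⟨i.1 + 1, by omega⟩ : (Fin k × Fin N) ⊕ Fin m) = Sum.inr ⟨0, hm⟩))
      simp at this
    
  have hss : F '' TA ⊂ TB := ⟨himsub, fun h => hWnot (h hWB)⟩
  have h1 : TA.ncard = (F '' TA).ncard := (Set.ncard_image_of_injective TA hinj).symm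
  have h2 : (F '' TA).ncard < TB.ncard := Set.ncard_lt_ncard hss (Set.toFinite _)
  calc cliqueCount (GA k N m) 3 = TA.ncard := rfl
    _ = (F '' TA).ncard := h1
    _ < TB.ncard := h2
    _ = cliqueCount (GB k N m) 3 := rfl

end Aux

theorem triangles_comparison (k p n : ℕ) (hk : 1 ≤ k) (hp : 2 ≤ p)
    (hn : k * (2 * p - 1) + 1 ≤ n) :
    cliqueCount
        (joinG (sumG (copiesG k (⊤ : SimpleGraph (Fin (2 * p - 1))))
                (⊥ : SimpleGraph (Fin 1)))
              (⊥ : SimpleGraph (Fin (n - k * (2 * p - 1) - 1)))) 3 <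
    cliqueCount
        (joinG (copiesG k (⊤ : SimpleGraph (Fin (2 * p - 1))))
              (⊥ : SimpleGraph (Fin (n - k * (2 * p - 1))))) 3 := by
  have hN : 3 ≤ 2 * p - 1 := by omega
  have hm : 1 ≤ n - k * (2 * p - 1) := by omega
  exact main_lemma k (2 * p - 1) (n - k * (2 * p - 1)) hk hN hm
end
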